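/- For all a, b, c, d, e, f ∈ ℂ, the 3×3 matrix over ℂ whose rows are the three vectors u(a, b, c, d, e, f), u(a, b, c, e, f, d), and u(a, b, c, f, d, e) has determinant zero. (Steiner's theorem: the three Pascal lines [A B C; F E D], [A B C; D F E], [A B C; E D F], obtained by cyclically permuting the bottom row, are concurrent; their common point is a Steiner point.) -/
import Mathlib

open Matrix

/-- The coordinates `(u₀, u₁, u₂)` of the Pascal line of the array
`[τ x₁, τ x₂, τ x₃; τ x₆, τ x₅, τ x₄]` of points on the conic `z₀z₂ = z₁²`,
where `τ a = (1, a, a²)`. -/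
def pascalVec (x1 x2 x3 x4 x5 x6 : ℂ) : Fin 3 → ℂ :=
  ![x1*x2*x4*x5 - x1*x2*x4*x6 - x1*x3*x4*x5 + x1*x3*x5*x6 + x2*x3*x4*x6 - x2*x3*x5*x6,
    -(x1*x2*x5) + x1*x2*x6 + x1*x3*x4 - x1*x3*x6 + x1*x4*x6 - x1*x5*x6 - x2*x3*x4 + x2*x3*x5
      - x2*x4*x5 + x2*x5*x6 + x3*x4*x5 - x3*x4*x6,
    -(x1*x4) + x1*x5 + x2*x4 - x2*x6 - x3*x5 + x3*x6]

/-- **Steiner's theorem**: the three Pascal lines `[A B C; F E D]`, `[A B C; D F E]`,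
`[A B C; E D F]`, obtained by cyclically permuting the bottom row, are concurrent;
their common point is a Steiner point. -/
theorem steiner_concurrence (a b c d e f : ℂ) :
    Matrix.det (Matrix.of
      ![pascalVec a b c d e f,
        pascalVec a b c e f d,
        pascalVec a b c f d e]) = 0 := by
  simp only [det_fin_three, pascalVec, Matrix.of_apply, Matrix.cons_val', Matrix.cons_val_zero,
    Matrix.cons_val_one, Matrix.head_cons, Matrix.empty_val', Matrix.cons_val_fin_one,
    Matrix.head_fin_const, Matrix.cons_val_two, Matrix.tail_cons]
  ring
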